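/- arXiv:0901.0751 — 5 statements merged into one kernel-verified Lean document; each statement's English description precedes it below -/
import Mathlib

section
/- If U is uniformly distributed on (0,1), V is uniform on (0,1) independent of U, α > 0, X₀ = U^{-α}, and X₁ = (V^{-α/(1+α)} - 1)X₀ + 1, then X₁^{-1/α} is uniformly distributed on (0,1). -/
open MeasureTheory Set

/-!
Conditionally on `U = u`, the step `V ↦ X₁^{-1/α}` is increasing, and `X₁^{-1/α} ≤ t` holds
exactly when `V ≤ ∂C/∂u (u, t)`, where `C(u, t) = (u^{-α} + t^{-α} - 1)^{-1/α}` is the Clayton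
copula. Hence `P(X₁^{-1/α} ≤ t) = ∫₀¹ ∂C/∂u (u, t) du = C(1, t) - C(0, t) = t`.
-/

open Filter Topology

instance isProbabilityMeasure_volume_restrict_Ioo_zero_one :
    IsProbabilityMeasure (volume.restrict (Ioo (0 : ℝ) 1)) :=
  ⟨by simp⟩

section UniformCDF

variable {ρ : Measure ℝ}

lemma measure_Iic_eq_zero_of_nonpos (h : ∀ s ∈ Ioo (0 : ℝ) 1, ρ (Iic s) = ENNReal.ofReal s)
    {t : ℝ} (ht : t ≤ 0) : ρ (Iic t) = 0 := by
  have hlim : Tendsto ENNReal.ofReal (𝓝[>] 0) (𝓝 0) := by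
    simpa using (ENNReal.continuous_ofReal.tendsto 0).mono_left nhdsWithin_le_nhds
  refine le_antisymm (ge_of_tendsto hlim ?_) zero_le
  filter_upwards [Ioo_mem_nhdsGT zero_lt_one] with s hs
  exact h s hs ▸ measure_mono (Iic_subset_Iic.2 (ht.trans hs.1.le))

lemma measure_Iic_eq_one_of_one_le [IsProbabilityMeasure ρ]
    (h : ∀ s ∈ Ioo (0 : ℝ) 1, ρ (Iic s) = ENNReal.ofReal s) {t : ℝ} (ht : 1 ≤ t) :
    ρ (Iic t) = 1 := by
  have hlim : Tendsto ENNReal.ofReal (𝓝[<] 1) (𝓝 1) := by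
    simpa using (ENNReal.continuous_ofReal.tendsto 1).mono_left nhdsWithin_le_nhds
  refine le_antisymm prob_le_one (le_of_tendsto hlim ?_)
  filter_upwards [Ioo_mem_nhdsLT zero_lt_one] with s hs
  exact h s hs ▸ measure_mono (Iic_subset_Iic.2 (hs.2.le.trans ht))

lemma volume_restrict_Ioo_zero_one_Iic {t : ℝ} (ht : t ∈ Ioo (0 : ℝ) 1) :
    volume.restrict (Ioo (0 : ℝ) 1) (Iic t) = ENNReal.ofReal t := by
  have hset : Iic t ∩ Ioo 0 1 = Ioc 0 t :=
    Set.ext fun _ => ⟨fun ⟨h, h'⟩ => ⟨h'.1, h⟩, fun ⟨h, h'⟩ => ⟨h', h, h'.trans_lt ht.2⟩⟩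
  rw [Measure.restrict_apply measurableSet_Iic, hset, Real.volume_Ioc, sub_zero]

lemma eq_volume_restrict_Ioo_zero_one_of_measure_Iic [IsProbabilityMeasure ρ]
    (h : ∀ s ∈ Ioo (0 : ℝ) 1, ρ (Iic s) = ENNReal.ofReal s) :
    ρ = volume.restrict (Ioo (0 : ℝ) 1) := by
  have hunif := fun s (hs : s ∈ Ioo (0 : ℝ) 1) => volume_restrict_Ioo_zero_one_Iic hs
  refine Measure.ext_of_Iic _ _ fun t => ?_
  rcases le_or_gt t 0 with ht0 | ht0
  · rw [measure_Iic_eq_zero_of_nonpos h ht0, measure_Iic_eq_zero_of_nonpos hunif ht0]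
  rcases lt_or_ge t 1 with ht1 | ht1
  · rw [h t ⟨ht0, ht1⟩, hunif t ⟨ht0, ht1⟩]
  · rw [measure_Iic_eq_one_of_one_le h ht1, measure_Iic_eq_one_of_one_le hunif ht1]

end UniformCDF

section Clayton

variable {α u t : ℝ}

noncomputable def claytonStep (α u v : ℝ) : ℝ :=
  ((v ^ (-α / (1 + α)) - 1) * u ^ (-α) + 1) ^ (-1 / α)

/-- For `u > 0` this is the Clayton copula `(u^{-α} + t^{-α} - 1)^{-1/α}`, written so that it
extends continuously by `0` to `u = 0`. -/
noncomputable def claytonCopula (α u t : ℝ) : ℝ :=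
  u * (1 + u ^ α * (t ^ (-α) - 1)) ^ (-(1 / α))

/-- `∂C/∂u (u, t)`: the conditional distribution function of the next state of the chain given
the current state `u`. -/
noncomputable def claytonCondCDF (α u t : ℝ) : ℝ :=
  (1 + u ^ α * (t ^ (-α) - 1)) ^ (-((1 + α) / α))

lemma measurable_claytonStep (α : ℝ) : Measurable (Function.uncurry (claytonStep α)) := by
  unfold claytonStep; fun_prop

lemma clayton_base_pos (hα : 0 ≤ α) (hu : 0 ≤ u) (ht : t ∈ Ioc 0 1) :
    0 < 1 + u ^ α * (t ^ (-α) - 1) := by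
  have hc : 1 ≤ t ^ (-α) :=
    Real.one_le_rpow_of_pos_of_le_one_of_nonpos ht.1 ht.2 (neg_nonpos.2 hα)
  have := mul_nonneg (Real.rpow_nonneg hu α) (sub_nonneg.2 hc)
  positivity

lemma continuousOn_clayton_base_rpow (hα : 0 < α) (ht : t ∈ Ioc 0 1) (p : ℝ) :
    ContinuousOn (fun u => (1 + u ^ α * (t ^ (-α) - 1)) ^ p) (Ici 0) :=
  ((continuous_const.add ((continuous_id.rpow_const fun _ => Or.inr hα.le).mul
    continuous_const)).continuousOn).rpow_const fun _ hu =>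
      Or.inl (clayton_base_pos hα.le hu ht).ne'

lemma hasDerivAt_claytonCopula (hα : 0 < α) (hu : 0 < u) (ht : t ∈ Ioc 0 1) :
    HasDerivAt (fun u => claytonCopula α u t) (claytonCondCDF α u t) u := by
  set c := t ^ (-α) - 1
  have hb : 1 + u ^ α * c ≠ 0 := (clayton_base_pos hα.le hu.le ht).ne'
  have hbase : HasDerivAt (fun u => 1 + u ^ α * c) (α * u ^ (α - 1) * c) u :=
    ((Real.hasDerivAt_rpow_const (Or.inl hu.ne')).mul_const c).const_add 1
  have hpow := (Real.hasDerivAt_rpow_const (p := -(1 / α)) (Or.inl hb)).comp u hbase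
  refine ((hasDerivAt_id u).mul hpow).congr_deriv ?_
  have hexp : -((1 + α) / α) = -(1 / α) - 1 := by field_simp; ring
  rw [claytonCondCDF, hexp, Real.rpow_sub_one hu.ne', Real.rpow_sub_one hb]
  simp only [id, Function.comp_apply]
  field_simp
  ring

lemma claytonCopula_zero (α t : ℝ) : claytonCopula α 0 t = 0 := zero_mul _

lemma claytonCopula_one (hα : α ≠ 0) (ht : 0 < t) : claytonCopula α 1 t = t := by
  rw [claytonCopula, Real.one_rpow, one_mul, one_mul, add_sub_cancel, ← Real.rpow_mul ht.le,
    neg_mul_neg, mul_one_div_cancel hα, Real.rpow_one]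

lemma integral_claytonCondCDF (hα : 0 < α) (ht : t ∈ Ioc 0 1) :
    ∫ u in (0 : ℝ)..1, claytonCondCDF α u t = t := by
  rw [intervalIntegral.integral_eq_sub_of_hasDerivAt_of_le (f := fun u => claytonCopula α u t)
    zero_le_one
    ((continuousOn_id.mul (continuousOn_clayton_base_rpow hα ht _)).mono Icc_subset_Ici_self)
    (fun u hu => hasDerivAt_claytonCopula hα hu.1 ht)
    (ContinuousOn.intervalIntegrable_of_Icc zero_le_one
      ((continuousOn_clayton_base_rpow hα ht _).mono Icc_subset_Ici_self)),
    claytonCopula_one hα.ne' ht.1, claytonCopula_zero, sub_zero]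

lemma claytonStep_le_iff (hα : 0 < α) (hu : 0 < u) {v : ℝ} (hv : v ∈ Ioc 0 1)
    (ht : t ∈ Ioc 0 1) : claytonStep α u v ≤ t ↔ v ≤ claytonCondCDF α u t := by
  have hβ : -α / (1 + α) < 0 := div_neg_of_neg_of_pos (neg_lt_zero.2 hα) (by linarith)
  have hvβ : 1 ≤ v ^ (-α / (1 + α)) :=
    Real.one_le_rpow_of_pos_of_le_one_of_nonpos hv.1 hv.2 hβ.le
  have huα : 0 < u ^ α := Real.rpow_pos_of_pos hu α
  have hX : 0 < (v ^ (-α / (1 + α)) - 1) * u ^ (-α) + 1 := by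
    have := Real.rpow_pos_of_pos hu (-α); nlinarith
  have hexp : (-α / (1 + α))⁻¹ = -((1 + α) / α) := by rw [inv_div, div_neg]
  rw [claytonStep, claytonCondCDF, ← hexp, Real.le_rpow_inv_iff_of_neg hv.1
    (clayton_base_pos hα.le hu.le ht) hβ, show -1 / α = (-α)⁻¹ by ring,
    Real.rpow_inv_le_iff_of_neg hX ht.1 (neg_lt_zero.2 hα), Real.rpow_neg hu.le,
    ← sub_le_iff_le_add, ← div_eq_mul_inv, le_div_iff₀ huα, mul_comm, le_sub_iff_add_le']

lemma claytonCondCDF_mem_Ioo (hα : 0 < α) (hu : 0 < u) (ht : t ∈ Ioo 0 1) :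
    claytonCondCDF α u t ∈ Ioo 0 1 := by
  have hc : 0 < t ^ (-α) - 1 :=
    sub_pos.2 (Real.one_lt_rpow_of_pos_of_lt_one_of_neg ht.1 ht.2 (neg_lt_zero.2 hα))
  have hbase : 1 < 1 + u ^ α * (t ^ (-α) - 1) :=
    lt_add_of_pos_right 1 (mul_pos (Real.rpow_pos_of_pos hu α) hc)
  exact ⟨Real.rpow_pos_of_pos (zero_lt_one.trans hbase) _,
    Real.rpow_lt_one_of_one_lt_of_neg hbase (neg_lt_zero.2 (by positivity))⟩

lemma volume_restrict_Ioo_claytonStep_le (hα : 0 < α) (hu : 0 < u) (ht : t ∈ Ioo 0 1) :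
    volume.restrict (Ioo (0 : ℝ) 1) {v | claytonStep α u v ≤ t} =
      ENNReal.ofReal (claytonCondCDF α u t) := by
  rw [← volume_restrict_Ioo_zero_one_Iic (claytonCondCDF_mem_Ioo hα hu ht),
    Measure.restrict_apply' measurableSet_Ioo, Measure.restrict_apply' measurableSet_Ioo]
  exact congrArg volume <| Set.ext fun v => and_congr_left fun hv =>
    claytonStep_le_iff hα hu (Ioo_subset_Ioc_self hv) (Ioo_subset_Ioc_self ht)

lemma map_claytonStep_prod_Iic (hα : 0 < α) (ht : t ∈ Ioo (0 : ℝ) 1) :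
    ((volume.restrict (Ioo (0 : ℝ) 1)).prod (volume.restrict (Ioo (0 : ℝ) 1))).map
      (Function.uncurry (claytonStep α)) (Iic t) = ENNReal.ofReal t := by
  have hint : IntegrableOn (fun u => claytonCondCDF α u t) (Ioo 0 1) :=
    (((continuousOn_clayton_base_rpow hα (Ioo_subset_Ioc_self ht) _).mono
      Icc_subset_Ici_self).integrableOn_Icc).mono_set Ioo_subset_Icc_self
  have hnonneg : ∀ᵐ u ∂volume.restrict (Ioo (0 : ℝ) 1), 0 ≤ claytonCondCDF α u t :=
    (ae_restrict_mem measurableSet_Ioo).mono fun u hu => (claytonCondCDF_mem_Ioo hα hu.1 ht).1.le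
  rw [Measure.map_apply (measurable_claytonStep α) measurableSet_Iic,
    Measure.prod_apply (measurable_claytonStep α measurableSet_Iic)]
  calc _ = ∫⁻ u in Ioo 0 1, ENNReal.ofReal (claytonCondCDF α u t) :=
        setLIntegral_congr_fun measurableSet_Ioo fun u hu =>
          volume_restrict_Ioo_claytonStep_le hα hu.1 ht
    _ = ENNReal.ofReal (∫ u in Ioo 0 1, claytonCondCDF α u t) :=
        (ofReal_integral_eq_lintegral_ofReal hint hnonneg).symm
    _ = ENNReal.ofReal t := by
        rw [← integral_Ioc_eq_integral_Ioo, ← intervalIntegral.integral_of_le zero_le_one,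
          integral_claytonCondCDF hα (Ioo_subset_Ioc_self ht)]

end Clayton

theorem clayton_markov_step_uniform_general
    {Ω : Type*} [MeasurableSpace Ω] (μ : Measure Ω)
    (U V : Ω → ℝ)
    (hind : ProbabilityTheory.IndepFun U V μ)
    (hUlaw : Measure.map U μ = volume.restrict (Ioo (0 : ℝ) 1))
    (hVlaw : Measure.map V μ = volume.restrict (Ioo (0 : ℝ) 1))
    (α : ℝ) (hα : 0 < α) :
    Measure.map
        (fun ω => ((((V ω) ^ (-α / (1 + α)) - 1) * (U ω) ^ (-α) + 1) ^ (-1 / α))) μ =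
      volume.restrict (Ioo (0 : ℝ) 1) := by
  set ν := volume.restrict (Ioo (0 : ℝ) 1)
  have hU : AEMeasurable U μ := .of_map_ne_zero (hUlaw ▸ IsProbabilityMeasure.ne_zero ν)
  have hV : AEMeasurable V μ := .of_map_ne_zero (hVlaw ▸ IsProbabilityMeasure.ne_zero ν)
  have hUV : μ.map (fun ω => (U ω, V ω)) = ν.prod ν := by
    rw [(ProbabilityTheory.indepFun_iff_map_prod_eq_prod_map_map' hU hV
      (hUlaw ▸ inferInstance) (hVlaw ▸ inferInstance)).1 hind, hUlaw, hVlaw]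
  have hlaw : μ.map (fun ω => claytonStep α (U ω) (V ω)) =
      (ν.prod ν).map (Function.uncurry (claytonStep α)) := by
    rw [← hUV, AEMeasurable.map_map_of_aemeasurable
      (measurable_claytonStep α).aemeasurable (hU.prodMk hV)]
    rfl
  have := Measure.isProbabilityMeasure_map (μ := ν.prod ν)
    (measurable_claytonStep α).aemeasurable
  exact hlaw.trans (eq_volume_restrict_Ioo_zero_one_of_measure_Iic fun t ht =>
    map_claytonStep_prod_Iic hα ht)

/-- If `U, V` are independent uniform(0,1) random variables, `α > 0`, `X₀ = U^(-α)` and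
`X₁ = (V^(-α/(1+α)) - 1) X₀ + 1`, then `X₁^(-1/α)` is uniform(0,1). -/
theorem clayton_markov_step_uniform
    {Ω : Type*} [MeasurableSpace Ω] (μ : Measure Ω) [IsProbabilityMeasure μ]
    (U V : Ω → ℝ) (hU : Measurable U) (hV : Measurable V)
    (hind : ProbabilityTheory.IndepFun U V μ)
    (hUlaw : Measure.map U μ = volume.restrict (Ioo (0 : ℝ) 1))
    (hVlaw : Measure.map V μ = volume.restrict (Ioo (0 : ℝ) 1))
    (α : ℝ) (hα : 0 < α) :
    Measure.map
        (fun ω => ((((V ω) ^ (-α / (1 + α)) - 1) * (U ω) ^ (-α) + 1) ^ (-1 / α))) μ =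
      volume.restrict (Ioo (0 : ℝ) 1) :=
  clayton_markov_step_uniform_general μ U V hind hUlaw hVlaw α hα
end

section
/- In the Clayton copula Markov chain in the transformed variables X_t = U_t^{-α} (state space (1,∞)), the conditional density of X₁ given X₀ = x is f(y|x) = ((1+α)/α) · x^{1+1/α} / (y - 1 + x)^{2+1/α} for y > 1, and for x in any bounded interval [1, x₀], f(y|x) ≥ x₀^{-1-1/α} f(y|x₀), so [1, x₀] is a small set. -/
open MeasureTheory Set

/-!
With `β = 1 + 1/α`, the transition density is `β x^β / (y - 1 + x)^(β + 1)`: the Lomax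
(Pareto II) density of shape `β` and scale `x`, shifted by `1`. Its survival function
`y ↦ ((y - 1 + x) / x)^(-β)` maps `(1, ∞)` bijectively onto `(0, 1)` and is inverted by the
Clayton update `v ↦ (v^(-1/β) - 1) x + 1`, so the one-dimensional change of variables formula
identifies the law of the update with the absolute derivative of the survival function.
The minorization holds because `x₀^(-β)` cancels the factor `x₀^β`, while `x^β ≥ 1` and
`y - 1 + x ≤ y - 1 + x₀`.
-/

theorem map_restrict_image_eq_withDensity_abs_deriv {s : Set ℝ} {g h h' : ℝ → ℝ}
    (hs : MeasurableSet s) (hg : Measurable g) (hh' : ∀ y ∈ s, HasDerivWithinAt h (h' y) s y)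
    (hgh : LeftInvOn g h s) :
    (volume.restrict (h '' s)).map g =
      (volume.restrict s).withDensity fun y => ENNReal.ofReal |h' y| := by
  set μ := (volume.restrict s).withDensity fun y => ENNReal.ofReal |h' y|
  have hμ : μ ≪ volume.restrict s := withDensity_absolutelyContinuous _ _
  have hh : AEMeasurable h μ :=
    (ContinuousOn.aemeasurable (fun y hy => (hh' y hy).continuousWithinAt) hs).mono_ac hμ
  have hgh_ae : g ∘ h =ᵐ[μ] id := hμ.ae_le ((ae_restrict_iff' hs).2 (ae_of_all _ hgh))
  have := map_withDensity_abs_det_fderiv_eq_addHaar volume hs.nullMeasurableSet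
    (fun y hy => (hh' y hy).hasFDerivWithinAt) hgh.injOn
  simp only [ContinuousLinearMap.det_toSpanSingleton] at this
  rw [← this, AEMeasurable.map_map_of_aemeasurable hg.aemeasurable hh,
    Measure.map_congr hgh_ae, Measure.map_id]

noncomputable def lomaxPDFReal (β s z : ℝ) : ℝ := β * s ^ β / (z + s) ^ (β + 1)

section Lomax

variable {β s z : ℝ}

lemma hasDerivAt_lomax_survival (hs : 0 < s) (hz : 0 < z + s) :
    HasDerivAt (fun z => ((z + s) / s) ^ (-β)) (-lomaxPDFReal β s z) z := by
  have hu : 0 < (z + s) / s := by positivity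
  have := (((hasDerivAt_id' z).add_const s).div_const s).rpow_const (p := -β) (Or.inl hu.ne')
  convert this using 1
  rw [lomaxPDFReal, show -β - 1 = -(β + 1) by ring, Real.rpow_neg hu.le, Real.div_rpow hz.le hs.le,
    Real.rpow_add_one hs.ne']
  field_simp

lemma invOn_lomax_sampler (hβ : 0 < β) (hs : 0 < s) :
    InvOn (fun v => (v ^ (-β⁻¹) - 1) * s + 1) (fun y => ((y - 1 + s) / s) ^ (-β))
      (Ioi 1) (Ioo 0 1) := by
  constructor
  · intro y (hy : 1 < y)
    have hu : 0 ≤ (y - 1 + s) / s := div_nonneg (by linarith) hs.le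
    simp only
    rw [← Real.rpow_mul hu, neg_mul_neg, mul_inv_cancel₀ hβ.ne', Real.rpow_one]
    field_simp
    ring
  · rintro v ⟨hv, -⟩
    simp only
    rw [show ((v ^ (-β⁻¹) - 1) * s + 1 - 1 + s) / s = v ^ (-β⁻¹) by field_simp; ring,
      ← Real.rpow_mul hv.le, neg_mul_neg, inv_mul_cancel₀ hβ.ne', Real.rpow_one]

lemma mapsTo_lomax_survival (hβ : 0 < β) (hs : 0 < s) :
    MapsTo (fun y => ((y - 1 + s) / s) ^ (-β)) (Ioi 1) (Ioo 0 1) := by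
  intro y (hy : 1 < y)
  have hu : 1 < (y - 1 + s) / s := by rw [one_lt_div hs]; linarith
  exact ⟨by positivity, Real.rpow_lt_one_of_one_lt_of_neg hu (neg_neg_of_pos hβ)⟩

lemma mapsTo_lomax_sampler (hβ : 0 < β) (hs : 0 < s) :
    MapsTo (fun v => (v ^ (-β⁻¹) - 1) * s + 1) (Ioo 0 1) (Ioi 1) := by
  rintro v ⟨hv₀, hv₁⟩
  have : 1 < v ^ (-β⁻¹) :=
    Real.one_lt_rpow_of_pos_of_lt_one_of_neg hv₀ hv₁ (neg_neg_of_pos (inv_pos.2 hβ))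
  show 1 < (v ^ (-β⁻¹) - 1) * s + 1
  nlinarith

theorem map_uniform_lomax_sampler (hβ : 0 < β) (hs : 0 < s) :
    (volume.restrict (Ioo 0 1)).map (fun v => (v ^ (-β⁻¹) - 1) * s + 1) =
      volume.withDensity fun y =>
        ENNReal.ofReal (if 1 < y then lomaxPDFReal β s (y - 1) else 0) := by
  have hinv := invOn_lomax_sampler hβ hs
  have hbij := hinv.bijOn (mapsTo_lomax_survival hβ hs) (mapsTo_lomax_sampler hβ hs)
  have hderiv : ∀ y ∈ Ioi (1 : ℝ), HasDerivWithinAt (fun y => ((y - 1 + s) / s) ^ (-β))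
      (-lomaxPDFReal β s (y - 1)) (Ioi 1) y := fun y (hy : 1 < y) =>
    ((hasDerivAt_lomax_survival hs (by linarith)).comp_sub_const y 1).hasDerivWithinAt
  rw [← hbij.image_eq, map_restrict_image_eq_withDensity_abs_deriv measurableSet_Ioi
    (by fun_prop) hderiv hinv.1, ← withDensity_indicator measurableSet_Ioi]
  congr 1
  ext y
  by_cases hy : 1 < y
  · have hys : 0 < y - 1 + s := by linarith
    have hpos : 0 < lomaxPDFReal β s (y - 1) := by unfold lomaxPDFReal; positivity
    simp [hy, abs_of_pos hpos]
  · simp [hy]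

lemma rpow_neg_mul_lomaxPDFReal_le {s₀ : ℝ} (hβ : 0 ≤ β) (hs : 1 ≤ s) (hss₀ : s ≤ s₀)
    (hz : 0 ≤ z) : s₀ ^ (-β) * lomaxPDFReal β s₀ z ≤ lomaxPDFReal β s z := by
  have hs₀ : 0 < s₀ := by linarith
  calc s₀ ^ (-β) * lomaxPDFReal β s₀ z = β * 1 / (z + s₀) ^ (β + 1) := by
        rw [lomaxPDFReal, Real.rpow_neg hs₀.le]
        field_simp
    _ ≤ lomaxPDFReal β s z := by
        unfold lomaxPDFReal
        gcongr
        exact Real.one_le_rpow hs hβ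

end Lomax

theorem clayton_small_set_general (α : ℝ) (hα : 0 < α) (x₀ : ℝ) :
    (∀ x : ℝ, 1 < x →
        Measure.map (fun v : ℝ => (v ^ (-α / (1 + α)) - 1) * x + 1)
            (volume.restrict (Ioo (0 : ℝ) 1)) =
          volume.withDensity
            (fun y : ℝ =>
              ENNReal.ofReal
                (if 1 < y then
                    ((1 + α) / α) * x ^ (1 + 1 / α) / (y - 1 + x) ^ (2 + 1 / α)
                  else 0))) ∧
      ∀ x ∈ Icc (1 : ℝ) x₀, ∀ y : ℝ, 1 < y →
        ((1 + α) / α) * x ^ (1 + 1 / α) / (y - 1 + x) ^ (2 + 1 / α) ≥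
          x₀ ^ (-1 - 1 / α) *
            (((1 + α) / α) * x₀ ^ (1 + 1 / α) / (y - 1 + x₀) ^ (2 + 1 / α)) := by
  have hβ : 0 < 1 + 1 / α := by positivity
  have hshape : (1 + α) / α = 1 + 1 / α := by field_simp; ring
  have hexp : 2 + 1 / α = 1 + 1 / α + 1 := by ring
  have hsampler : -α / (1 + α) = -(1 + 1 / α)⁻¹ := by field_simp; ring
  refine ⟨fun x hx => ?_, fun x ⟨hx, hxx₀⟩ y hy => ?_⟩
  · rw [hsampler, hshape, hexp]
    exact map_uniform_lomax_sampler hβ (by linarith)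
  · rw [hshape, hexp, show -1 - 1 / α = -(1 + 1 / α) by ring]
    exact rpow_neg_mul_lomaxPDFReal_le hβ.le hx hxx₀ (by linarith)

/-- For the Clayton copula Markov chain in variables `X_t = U_t^(-α)` (state space `(1,∞)`):
the conditional density of `X₁ = (V^(-α/(1+α)) - 1) x + 1` given `X₀ = x > 1` is
`f(y|x) = ((1+α)/α) x^(1+1/α) / (y-1+x)^(2+1/α)` on `y > 1`, and on `[1, x₀]` one has the
minorization `f(y|x) ≥ x₀^(-1-1/α) f(y|x₀)`, so `[1, x₀]` is a small set. -/
theorem clayton_small_set (α : ℝ) (hα : 0 < α) (x₀ : ℝ) (hx₀ : 1 ≤ x₀) :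
    (∀ x : ℝ, 1 < x →
        Measure.map (fun v : ℝ => (v ^ (-α / (1 + α)) - 1) * x + 1)
            (volume.restrict (Ioo (0 : ℝ) 1)) =
          volume.withDensity
            (fun y : ℝ =>
              ENNReal.ofReal
                (if 1 < y then
                    ((1 + α) / α) * x ^ (1 + 1 / α) / (y - 1 + x) ^ (2 + 1 / α)
                  else 0))) ∧
      ∀ x ∈ Icc (1 : ℝ) x₀, ∀ y : ℝ, 1 < y →
        ((1 + α) / α) * x ^ (1 + 1 / α) / (y - 1 + x) ^ (2 + 1 / α) ≥
          x₀ ^ (-1 - 1 / α) *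
            (((1 + α) / α) * x₀ ^ (1 + 1 / α) / (y - 1 + x₀) ^ (2 + 1 / α)) :=
  clayton_small_set_general α hα x₀
end

section
/- For the Gumbel copula Markov chain in transformed variables X_t = (-log U_t)^α with α > 1, the conditional expectation satisfies E[X_{t+1} | X_t = x] = α x^{1 - 1/α} for all x > 0. -/
/-!
With `p = 1/α`, the density `f t = p t^(p-1) exp(-t^p)` is the Weibull density, whose primitive is
`-exp(-t^p)`. Hence the tail `∫_x^∞ f = exp(-x^p)` is the survival function `F x`, and the
conditional mean `∫₀^∞ f(x + y)/f(x) dy = F(x)/f(x)` simplifies to `α x^(1-1/α)`.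
-/

open MeasureTheory Set Filter Topology

theorem hasDerivAt_neg_exp_neg_rpow (p : ℝ) {t : ℝ} (ht : 0 < t) :
    HasDerivAt (fun s : ℝ => -Real.exp (-s ^ p)) (p * t ^ (p - 1) * Real.exp (-t ^ p)) t := by
  refine ((Real.hasDerivAt_rpow_const (Or.inl ht.ne')).neg.exp.neg).congr_deriv ?_
  simp only [Pi.neg_apply]
  ring

theorem integral_Ioi_weibull_density {p a : ℝ} (hp : 0 < p) (ha : 0 ≤ a) :
    ∫ t in Ioi a, p * t ^ (p - 1) * Real.exp (-t ^ p) = Real.exp (-a ^ p) := by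
  have hcont : Continuous fun s : ℝ => -Real.exp (-s ^ p) := by
    have := Real.continuous_rpow_const hp.le
    fun_prop
  have hlim : Tendsto (fun s : ℝ => -Real.exp (-s ^ p)) atTop (𝓝 (-0)) :=
    (Real.tendsto_exp_atBot.comp (tendsto_neg_atTop_atBot.comp (tendsto_rpow_atTop hp))).neg
  rw [integral_Ioi_of_hasDerivAt_of_nonneg hcont.continuousWithinAt
    (fun t ht => hasDerivAt_neg_exp_neg_rpow p (ha.trans_lt ht))
    (fun t ht => by have := ha.trans_lt ht; positivity) hlim]
  ring

theorem setIntegral_Ioi_comp_const_add {E : Type*} [NormedAddCommGroup E] [NormedSpace ℝ E]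
    (g : ℝ → E) (x : ℝ) :
    ∫ y in Ioi 0, g (x + y) = ∫ t in Ioi x, g t := by
  have := (measurePreserving_add_left volume x).setIntegral_preimage_emb
    (measurableEmbedding_addLeft x) g (Ioi x)
  simpa [preimage_const_add_Ioi] using this

/-- Gumbel chain conditional mean: with `f(x) = α⁻¹ x^(1/α-1) exp(-x^(1/α))` and
`P(X_{t+1} ≥ x₂ | X_t = x) = f(x + x₂)/f(x)`, one has
`E[X_{t+1} | X_t = x] = ∫₀^∞ f(x + x₂)/f(x) dx₂ = α x^(1-1/α)` for all `x > 0`. -/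
theorem gumbel_conditional_mean (α : ℝ) (hα : 1 < α) (x : ℝ) (hx : 0 < x) :
    ∫ y in Ioi (0 : ℝ),
        (α⁻¹ * (x + y) ^ (1 / α - 1) * Real.exp (-(x + y) ^ (1 / α))) /
          (α⁻¹ * x ^ (1 / α - 1) * Real.exp (-x ^ (1 / α))) =
      α * x ^ (1 - 1 / α) := by
  have hα₀ : 0 < α := one_pos.trans hα
  have hpow : x ^ (1 - 1 / α) * x ^ (1 / α - 1) = 1 := by
    rw [← Real.rpow_add hx, sub_add_sub_cancel, sub_self, Real.rpow_zero]
  rw [integral_div, setIntegral_Ioi_comp_const_add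
    (fun t => α⁻¹ * t ^ (1 / α - 1) * Real.exp (-t ^ (1 / α))), ← one_div,
    integral_Ioi_weibull_density (by positivity) hx.le, div_eq_iff (by positivity)]
  linear_combination -(α * α⁻¹ * Real.exp (-x ^ (1 / α))) * hpow -
    Real.exp (-x ^ (1 / α)) * mul_inv_cancel₀ hα₀.ne'
end

section
/- For α > 1, the constant κ_α = (1 - 1/α) · B(1 - 1/(2α), 1 - 1/(2α)) satisfies κ_α < 1, where B is the Beta function. -/
/-!
Write `b = 1/(2α) ∈ (0, 1/2)`, so that `κ_α = (1 - 2b) B(1 - b, 1 - b)`. By AM-GM,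
`t^(-b) (1-t)^(-b) ≤ (t^(-2b) + (1-t)^(-2b)) / 2`, strictly for `t ≠ 1/2`, and the right-hand
side integrates to exactly `1/(1 - 2b)` over `(0, 1)`.
-/

open MeasureTheory Set

namespace Real

lemma rpow_two_mul {x : ℝ} (hx : 0 ≤ x) (s : ℝ) : x ^ (2 * s) = (x ^ s) ^ 2 := by
  rw [mul_comm, ← rpow_mul_natCast hx]
  norm_num

lemma rpow_mul_rpow_le_add_rpow_two_mul_div_two {x y : ℝ} (hx : 0 ≤ x) (hy : 0 ≤ y) (s : ℝ) :
    x ^ s * y ^ s ≤ (x ^ (2 * s) + y ^ (2 * s)) / 2 := by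
  rw [rpow_two_mul hx, rpow_two_mul hy]
  linarith [two_mul_le_add_sq (x ^ s) (y ^ s)]

lemma rpow_mul_rpow_lt_add_rpow_two_mul_div_two {x y s : ℝ} (hx : 0 ≤ x) (hy : 0 ≤ y)
    (hxy : x ≠ y) (hs : s ≠ 0) : x ^ s * y ^ s < (x ^ (2 * s) + y ^ (2 * s)) / 2 := by
  have hne : x ^ s ≠ y ^ s := fun h ↦ hxy ((rpow_left_inj hx hy hs).1 h)
  rw [rpow_two_mul hx, rpow_two_mul hy]
  nlinarith [sq_pos_of_ne_zero (sub_ne_zero.2 hne)]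

end Real

open Real

lemma integral_rpow_zero_one {p : ℝ} (hp : -1 < p) : ∫ t in (0 : ℝ)..1, t ^ p = 1 / (p + 1) := by
  rw [integral_rpow (Or.inl hp), one_rpow, zero_rpow (by linarith), sub_zero]

lemma integral_one_sub_rpow_zero_one {p : ℝ} (hp : -1 < p) :
    ∫ t in (0 : ℝ)..1, (1 - t) ^ p = 1 / (p + 1) := by
  rw [intervalIntegral.integral_comp_sub_left (fun t ↦ t ^ p), sub_self, sub_zero,
    integral_rpow_zero_one hp]

lemma intervalIntegrable_one_sub_rpow {p : ℝ} (hp : -1 < p) :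
    IntervalIntegrable (fun t : ℝ ↦ (1 - t) ^ p) volume 0 1 := by
  simpa using
    ((intervalIntegral.intervalIntegrable_rpow' hp (a := 0) (b := 1)).comp_sub_left 1).symm

theorem integral_rpow_mul_one_sub_rpow_lt {s : ℝ} (hs : -1 / 2 < s) (hs0 : s ≠ 0) :
    ∫ t in (0 : ℝ)..1, t ^ s * (1 - t) ^ s < 1 / (2 * s + 1) := by
  have hp : -1 < 2 * s := by linarith
  set g : ℝ → ℝ := fun t ↦ (t ^ (2 * s) + (1 - t) ^ (2 * s)) / 2
  have hg_int : IntervalIntegrable g volume 0 1 :=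
    ((intervalIntegral.intervalIntegrable_rpow' hp).add
      (intervalIntegrable_one_sub_rpow hp)).div_const 2
  have hg : ∫ t in (0 : ℝ)..1, g t = 1 / (2 * s + 1) := by
    rw [intervalIntegral.integral_div, intervalIntegral.integral_add
      (intervalIntegral.intervalIntegrable_rpow' hp) (intervalIntegrable_one_sub_rpow hp),
      integral_rpow_zero_one hp, integral_one_sub_rpow_zero_one hp]
    ring
  have hle : ∀ t ∈ Ioc (0 : ℝ) 1, t ^ s * (1 - t) ^ s ≤ g t := fun t ht ↦
    rpow_mul_rpow_le_add_rpow_two_mul_div_two ht.1.le (sub_nonneg.2 ht.2) s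
  have hlt : Ioo (0 : ℝ) (1 / 2) ⊆ {t | t ^ s * (1 - t) ^ s < g t} ∩ Ioc 0 1 := fun t ht ↦
    ⟨rpow_mul_rpow_lt_add_rpow_two_mul_div_two ht.1.le (by linarith [ht.2])
      (by linarith [ht.2]) hs0, ht.1, by linarith [ht.2]⟩
  have hf_int : IntervalIntegrable (fun t ↦ t ^ s * (1 - t) ^ s) volume 0 1 := by
    refine hg_int.mono_fun' (by fun_prop) ?_
    rw [uIoc_of_le zero_le_one]
    filter_upwards [ae_restrict_mem measurableSet_Ioc] with t ht
    rw [norm_of_nonneg (by have := ht.1; have := ht.2; positivity)]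
    exact hle t ht
  rw [← hg]
  refine intervalIntegral.integral_lt_integral_of_ae_le_of_measure_setOfPred_lt_ne_zero
    zero_le_one hf_int hg_int ?_ ?_
  · filter_upwards [ae_restrict_mem measurableSet_Ioc] with t ht using hle t ht
  · rw [Measure.restrict_apply' measurableSet_Ioc]
    refine (lt_of_lt_of_le ?_ (measure_mono hlt)).ne'
    simp

/-- For `α > 1`, `κ_α = (1 - 1/α) B(1 - 1/(2α), 1 - 1/(2α)) < 1`, where
`B(a,b) = ∫₀¹ t^(a-1)(1-t)^(b-1) dt` is the Beta function. -/
theorem gumbel_drift_constant_lt_one (α : ℝ) (hα : 1 < α) :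
    (1 - 1 / α) *
        (∫ t in Ioo (0 : ℝ) 1,
          t ^ ((1 - 1 / (2 * α)) - 1) * (1 - t) ^ ((1 - 1 / (2 * α)) - 1)) < 1 := by
  have hα0 : 0 < α := by linarith
  set s : ℝ := (1 - 1 / (2 * α)) - 1 with hs_def
  have hs : -1 / 2 < s := by
    rw [hs_def, sub_sub_cancel_left, neg_div, neg_lt_neg_iff,
      div_lt_div_iff₀ (by positivity) two_pos]
    linarith
  have hs0 : s ≠ 0 := by rw [hs_def, sub_sub_cancel_left, neg_ne_zero]; positivity
  have hκ : 1 - 1 / α = 2 * s + 1 := by rw [hs_def]; field_simp; ring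
  have hκ_pos : 0 < 2 * s + 1 := by linarith
  rw [hκ, ← integral_Ioc_eq_integral_Ioo, ← intervalIntegral.integral_of_le zero_le_one]
  calc (2 * s + 1) * ∫ t in (0 : ℝ)..1, t ^ s * (1 - t) ^ s
      < (2 * s + 1) * (1 / (2 * s + 1)) :=
        mul_lt_mul_of_pos_left (integral_rpow_mul_one_sub_rpow_lt hs hs0) hκ_pos
    _ = 1 := by field_simp
end

section
/- For the EFGM copula with |α| < 1, the Fisher information for α with known uniform marginals equals Σ(α) = ∫₀¹∫₀¹ (1 - 2u1 - 2u2 + 4u1u2)² / (1 + α - 2α(u1+u2) + 4α u1 u2) du1 du2 = Σ_{k=1}^∞ α^{2k-2}/(1+2k)² (in particular the series converges). -/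
/-!
Writing `gᵢ = 1 - 2uᵢ`, the copula density is `1 + α g₁ g₂` and the score numerator is `g₁ g₂`,
so the integrand `(g₁ g₂)² / (1 + α g₁ g₂)` is the geometric series `∑ (-α)ⁿ (g₁ g₂)ⁿ⁺²`,
dominated termwise by `|α|ⁿ`. Integrating term by term, the `n`-th term factorises into
`(-α)ⁿ (∫₀¹ (1 - 2u)ⁿ⁺² du)²`, and that moment is `1 / (n + 3)` for even `n` and `0` for odd `n`.
-/

open MeasureTheory Set

theorem integral_tsum_of_norm_le {X E : Type*} [MeasurableSpace X] [NormedAddCommGroup E]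
    [NormedSpace ℝ E] {μ : Measure X} [IsFiniteMeasure μ] {f : ℕ → X → E} {C : ℕ → ℝ}
    (hf : ∀ n, AEStronglyMeasurable (f n) μ) (hfC : ∀ n, ∀ᵐ x ∂μ, ‖f n x‖ ≤ C n)
    (hC : Summable C) :
    ∫ x, ∑' n, f n x ∂μ = ∑' n, ∫ x, f n x ∂μ := by
  have hint : ∀ n, ∫ x, ‖f n x‖ ∂μ ≤ C n * μ.real univ := fun n =>
    (le_abs_self _).trans <| by
      simpa using norm_integral_le_of_norm_le_const (f := fun x => ‖f n x‖) (by simpa using hfC n)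
  refine (integral_tsum_of_summable_integral_norm (fun n => .of_bound (hf n) (C n) (hfC n))
    (.of_nonneg_of_le (fun n => integral_nonneg fun _ => norm_nonneg _) hint
      (hC.mul_right _))).symm

theorem integral_integral_tsum_mul_mul {X : Type*} [MeasurableSpace X] {μ : Measure X}
    [IsFiniteMeasure μ] {c : ℕ → ℝ} (hc : Summable fun n => |c n|) {φ : ℕ → X → ℝ}
    (hφm : ∀ n, AEStronglyMeasurable (φ n) μ) (hφ : ∀ n, ∀ᵐ x ∂μ, |φ n x| ≤ 1) :
    ∫ x, ∫ y, ∑' n, c n * φ n x * φ n y ∂μ ∂μ = ∑' n, c n * (∫ x, φ n x ∂μ) ^ 2 := by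
  have hI : ∀ n, |∫ x, φ n x ∂μ| ≤ μ.real univ := fun n => by
    simpa using norm_integral_le_of_norm_le_const (f := φ n) (C := 1) (by simpa using hφ n)
  have inner : ∀ᵐ x ∂μ, ∫ y, ∑' n, c n * φ n x * φ n y ∂μ =
      ∑' n, c n * φ n x * ∫ y, φ n y ∂μ := by
    filter_upwards [ae_all_iff.2 hφ] with x hx
    rw [integral_tsum_of_norm_le (C := fun n => |c n|) (fun n => (hφm n).const_mul _)
      (fun n => ?_) hc]
    · simp_rw [integral_const_mul]
    filter_upwards [hφ n] with y hy
    calc ‖c n * φ n x * φ n y‖ = |c n| * |φ n x| * |φ n y| := by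
          simp only [norm_mul, Real.norm_eq_abs]
      _ ≤ |c n| * 1 * 1 := by gcongr; exact hx n
      _ = |c n| := by ring
  rw [integral_congr_ae inner, integral_tsum_of_norm_le (C := fun n => |c n| * μ.real univ)
    (fun n => ((hφm n).const_mul _).mul_const _) (fun n => ?_) (hc.mul_right _)]
  · simp_rw [integral_mul_const, integral_const_mul]
    ring_nf
  filter_upwards [hφ n] with x hx
  calc ‖c n * φ n x * ∫ y, φ n y ∂μ‖ = |c n| * |φ n x| * |∫ y, φ n y ∂μ| := by
        simp only [norm_mul, Real.norm_eq_abs]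
    _ ≤ |c n| * 1 * μ.real univ := by gcongr; exact hI n
    _ = |c n| * μ.real univ := by ring

theorem integral_Ioo_one_sub_two_mul_pow (m : ℕ) :
    ∫ u in Ioo (0 : ℝ) 1, (1 - 2 * u) ^ m = (1 + (-1) ^ m) / (2 * (m + 1)) := by
  rw [← integral_Ioc_eq_integral_Ioo, ← intervalIntegral.integral_of_le zero_le_one,
    intervalIntegral.integral_comp_sub_mul (fun x => x ^ m) two_ne_zero, integral_pow]
  norm_num
  field_simp
  ring

theorem abs_one_sub_two_mul_le_one {u : ℝ} (hu : u ∈ Icc (0 : ℝ) 1) : |1 - 2 * u| ≤ 1 :=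
  abs_le.2 ⟨by linarith [hu.2], by linarith [hu.1]⟩

theorem sq_div_one_add_mul_eq_tsum {a g : ℝ} (h : |a * g| < 1) :
    g ^ 2 / (1 + a * g) = ∑' n : ℕ, (-a) ^ n * g ^ (n + 2) := by
  have hne : 1 + a * g ≠ 0 := by linarith [neg_abs_le (a * g)]
  have hgeom := tsum_geometric_of_norm_lt_one (ξ := -a * g) (by simpa using h)
  simp_rw [pow_add, ← mul_assoc, ← mul_pow]
  rw [tsum_mul_right, hgeom]
  field_simp
  ring_nf

theorem summable_pow_two_mul_div_sq {α : ℝ} (hα : |α| < 1) :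
    Summable fun k : ℕ => α ^ (2 * k) / ((2 * k + 3 : ℝ)) ^ 2 := by
  have hα2 : α ^ 2 < 1 := by simpa using sq_lt_one_iff_abs_lt_one α |>.2 hα
  refine .of_nonneg_of_le (fun k => by rw [pow_mul]; positivity) (fun k => ?_)
    (summable_geometric_of_lt_one (sq_nonneg α) hα2)
  rw [pow_mul]
  exact div_le_self (by positivity) (by nlinarith [k.cast_nonneg (α := ℝ)])

theorem efgm_integrand_eq_tsum {α u₁ u₂ : ℝ} (hα : |α| < 1) (h₁ : u₁ ∈ Icc (0 : ℝ) 1)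
    (h₂ : u₂ ∈ Icc (0 : ℝ) 1) :
    (1 - 2 * u₁ - 2 * u₂ + 4 * u₁ * u₂) ^ 2 / (1 + α - 2 * α * (u₁ + u₂) + 4 * α * u₁ * u₂) =
      ∑' n : ℕ, (-α) ^ n * (1 - 2 * u₁) ^ (n + 2) * (1 - 2 * u₂) ^ (n + 2) := by
  have hg : |α * ((1 - 2 * u₁) * (1 - 2 * u₂))| < 1 := by
    rw [abs_mul, abs_mul]
    calc |α| * (|1 - 2 * u₁| * |1 - 2 * u₂|) ≤ |α| * (1 * 1) := by
          gcongr <;> exact abs_one_sub_two_mul_le_one ‹_›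
      _ < 1 := by simpa using hα
  rw [show 1 - 2 * u₁ - 2 * u₂ + 4 * u₁ * u₂ = (1 - 2 * u₁) * (1 - 2 * u₂) by ring,
    show 1 + α - 2 * α * (u₁ + u₂) + 4 * α * u₁ * u₂ = 1 + α * ((1 - 2 * u₁) * (1 - 2 * u₂)) by
      ring, sq_div_one_add_mul_eq_tsum hg]
  exact tsum_congr fun n => by rw [mul_pow]; ring

theorem tsum_neg_pow_mul_sq_integral_Ioo_one_sub_two_mul_pow {α : ℝ} (hα : |α| < 1) :
    ∑' n : ℕ, (-α) ^ n * (∫ u in Ioo (0 : ℝ) 1, (1 - 2 * u) ^ (n + 2)) ^ 2 =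
      ∑' k : ℕ, α ^ (2 * k) / ((2 * k + 3 : ℝ)) ^ 2 := by
  have heven : ∀ k : ℕ, (-α) ^ (2 * k) * (∫ u in Ioo (0 : ℝ) 1, (1 - 2 * u) ^ (2 * k + 2)) ^ 2 =
      α ^ (2 * k) / (2 * k + 3) ^ 2 := by
    intro k
    rw [integral_Ioo_one_sub_two_mul_pow, Even.neg_pow ⟨k, by ring⟩,
      Even.neg_one_pow ⟨k + 1, by ring⟩]
    push_cast
    field_simp
    ring
  have hodd : ∀ k : ℕ,
      (-α) ^ (2 * k + 1) * (∫ u in Ioo (0 : ℝ) 1, (1 - 2 * u) ^ (2 * k + 1 + 2)) ^ 2 = 0 := by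
    intro k
    rw [integral_Ioo_one_sub_two_mul_pow, Odd.neg_one_pow ⟨k + 1, by ring⟩]
    simp
  rw [← tsum_even_add_odd (by simpa only [heven] using summable_pow_two_mul_div_sq hα)
    (by simpa only [hodd] using summable_zero)]
  simp only [heven, hodd, tsum_zero, add_zero]

/-- For the EFGM copula with `|α| < 1`, the Fisher information for `α` with known
uniform marginals equals
`∫₀¹∫₀¹ (1-2u₁-2u₂+4u₁u₂)² / (1+α-2α(u₁+u₂)+4αu₁u₂) du₁ du₂ = Σ_{k≥1} α^{2k-2}/(1+2k)²`,
and in particular the series converges. -/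
theorem efgm_fisher_information (α : ℝ) (hα : |α| < 1) :
    Summable (fun k : ℕ => α ^ (2 * k) / ((2 * k + 3 : ℝ)) ^ 2) ∧
      ∫ u₁ in Ioo (0 : ℝ) 1, ∫ u₂ in Ioo (0 : ℝ) 1,
          (1 - 2 * u₁ - 2 * u₂ + 4 * u₁ * u₂) ^ 2 /
            (1 + α - 2 * α * (u₁ + u₂) + 4 * α * u₁ * u₂) =
        ∑' k : ℕ, α ^ (2 * k) / ((2 * k + 3 : ℝ)) ^ 2 := by
  refine ⟨summable_pow_two_mul_div_sq hα, ?_⟩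
  have hbound : ∀ n : ℕ, ∀ᵐ u ∂volume.restrict (Ioo (0 : ℝ) 1), |(1 - 2 * u) ^ (n + 2)| ≤ 1 :=
    fun n => (ae_restrict_mem measurableSet_Ioo).mono fun u hu => by
      rw [abs_pow]
      exact pow_le_one₀ (abs_nonneg _) (abs_one_sub_two_mul_le_one (Ioo_subset_Icc_self hu))
  calc _ = ∫ u₁ in Ioo (0 : ℝ) 1, ∫ u₂ in Ioo (0 : ℝ) 1,
          ∑' n : ℕ, (-α) ^ n * (1 - 2 * u₁) ^ (n + 2) * (1 - 2 * u₂) ^ (n + 2) :=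
        setIntegral_congr_fun measurableSet_Ioo fun u₁ h₁ =>
          setIntegral_congr_fun measurableSet_Ioo fun u₂ h₂ =>
            efgm_integrand_eq_tsum hα (Ioo_subset_Icc_self h₁) (Ioo_subset_Icc_self h₂)
    _ = ∑' n : ℕ, (-α) ^ n * (∫ u in Ioo (0 : ℝ) 1, (1 - 2 * u) ^ (n + 2)) ^ 2 :=
        integral_integral_tsum_mul_mul
          (by simpa using summable_geometric_of_lt_one (abs_nonneg α) hα) (fun n => by fun_prop)
          hbound
    _ = _ := tsum_neg_pow_mul_sq_integral_Ioo_one_sub_two_mul_pow hα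
end
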